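/- arXiv:1812.00905 — 2 statements merged into one kernel-verified Lean document; each statement's English description precedes it below -/
import Mathlib

section
/- The truncated fixed point p₊ = (m₊, λ₊) with m₊ = -(23-√34)/33 and λ₊ = (328-8√34)/(11979π²) satisfies η(m₊, λ₊) ≠ 0 and λ₊π²/(1+m₊)² ≠ 1, where η = 4λπ²/((1+m)² - λπ²); hence p₊ violates the Ward constraint. -/
open Real

/-!
With `s = √34` one has `1 + m₊ = (10 + s)/33`, so `(1 + m₊)² = (134 + 20s)/1089`, while
`λ₊π² = (328 - 8s)/11979 = (328 - 8s)/(11 · 1089)`. Since `0 ≤ s < 41`, this gives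
`0 < λ₊π² < (1 + m₊)²`, which makes `η(p₊)` a positive quotient and `λ₊π²/(1 + m₊)²` lie strictly
between `0` and `1`.
-/

lemma anomalous_dim_ne_zero_and_ratio_ne_one {x y : ℝ} (hx : 0 < x) (hxy : x < y) :
    4 * x / (y - x) ≠ 0 ∧ x / y ≠ 1 :=
  ⟨(div_pos (by positivity) (sub_pos.2 hxy)).ne',
    ((div_lt_one (hx.trans hxy)).2 hxy).ne⟩

lemma sq_one_add_m_plus :
    (1 + -(23 - √34) / 33) ^ 2 = (134 + 20 * √34) / 1089 := by
  have hs : √34 ^ 2 = 34 := sq_sqrt (by norm_num)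
  linear_combination hs / 1089

lemma l_plus_mul_pi_sq :
    (328 - 8 * √34) / (11979 * π ^ 2) * π ^ 2 = (328 - 8 * √34) / 11979 := by
  field_simp

lemma sqrt_thirty_four_lt : √34 < 41 := by
  rw [sqrt_lt' (by norm_num)]
  norm_num

/-- The truncated fixed point `p₊ = (m₊, λ₊)` with `m₊ = -(23-√34)/33` and
`λ₊ = (328-8√34)/(11979π²)` satisfies `η(p₊) ≠ 0` and `λ₊π²/(1+m₊)² ≠ 1`,
hence violates the Ward constraint. -/
theorem p_plus_violates_ward :
    let m : ℝ := -(23 - Real.sqrt 34) / 33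
    let l : ℝ := (328 - 8 * Real.sqrt 34) / (11979 * π ^ 2)
    4 * l * π ^ 2 / ((1 + m) ^ 2 - l * π ^ 2) ≠ 0 ∧
      l * π ^ 2 / (1 + m) ^ 2 ≠ 1 := by
  intro m l
  rw [mul_assoc, l_plus_mul_pi_sq, sq_one_add_m_plus]
  have hs₀ : 0 ≤ √34 := sqrt_nonneg 34
  have hs₁ : √34 < 41 := sqrt_thirty_four_lt
  exact anomalous_dim_ne_zero_and_ratio_ne_one (by linarith) (by linarith)
end

section
/- For the truncated flow, substituting the non-trivial Ward-constraint solution λ = 11(1+m)²/(5π²) into the flow equations yields β_m = (4/9)(12m + 11) and β₄₁ = 484(m+1)(15m+13)/(225π²), and these two functions have no common zero: β_m vanishes only at m = -11/12 while β₄₁ vanishes only at m = -1 and m = -13/15. -/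
open Real

/-- For the truncated flow, substituting the Ward-constraint solution
`λ = 11(1+m)²/(5π²)` yields `β_m = (4/9)(12m+11)` and
`β₄₁ = 484(m+1)(15m+13)/(225π²)`; `β_m` vanishes only at `m = -11/12` while `β₄₁`
vanishes only at `m = -1` or `m = -13/15`, so they have no common zero. -/
theorem truncated_constraint_no_fixed_point (m : ℝ) (hm : 1 + m ≠ 0) :
    (-(2 + 4 * (11 * (1 + m) ^ 2 / (5 * π ^ 2)) * π ^ 2
          / ((1 + m) ^ 2 - (11 * (1 + m) ^ 2 / (5 * π ^ 2)) * π ^ 2)) * m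
        - 10 * (11 * (1 + m) ^ 2 / (5 * π ^ 2)) * π ^ 2
          * (1 + (4 * (11 * (1 + m) ^ 2 / (5 * π ^ 2)) * π ^ 2
              / ((1 + m) ^ 2 - (11 * (1 + m) ^ 2 / (5 * π ^ 2)) * π ^ 2)) / 6)
          / (1 + m) ^ 2
        = 4 / 9 * (12 * m + 11)) ∧
    (-2 * (4 * (11 * (1 + m) ^ 2 / (5 * π ^ 2)) * π ^ 2
          / ((1 + m) ^ 2 - (11 * (1 + m) ^ 2 / (5 * π ^ 2)) * π ^ 2))
          * (11 * (1 + m) ^ 2 / (5 * π ^ 2))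
        + 4 * (11 * (1 + m) ^ 2 / (5 * π ^ 2)) ^ 2 * π ^ 2
          * (1 + (4 * (11 * (1 + m) ^ 2 / (5 * π ^ 2)) * π ^ 2
              / ((1 + m) ^ 2 - (11 * (1 + m) ^ 2 / (5 * π ^ 2)) * π ^ 2)) / 6)
          / (1 + m) ^ 3
        = 484 * (m + 1) * (15 * m + 13) / (225 * π ^ 2)) ∧
    (4 / 9 * (12 * m + 11) = 0 ↔ m = -11 / 12) ∧
    (484 * (m + 1) * (15 * m + 13) / (225 * π ^ 2) = 0 ↔ (m = -1 ∨ m = -13 / 15)) ∧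
    ¬(4 / 9 * (12 * m + 11) = 0 ∧ 484 * (m + 1) * (15 * m + 13) / (225 * π ^ 2) = 0) := by
  have hπ : (π:ℝ) ≠ 0 := Real.pi_ne_zero
  have hπ2 : (π:ℝ)^2 ≠ 0 := pow_ne_zero _ hπ
  have hd : (1 + m) ^ 2 - (11 * (1 + m) ^ 2 / (5 * π ^ 2)) * π ^ 2 ≠ 0 := by
    have : (1 + m) ^ 2 - (11 * (1 + m) ^ 2 / (5 * π ^ 2)) * π ^ 2
        = -(6/5) * (1 + m)^2 := by field_simp; ring
    rw [this]
    positivity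
  have hden : (1 + m) ^ 2 - (11 * (1 + m) ^ 2 / (5 * π ^ 2)) * π ^ 2
      = -(6/5) * (1 + m)^2 := by field_simp; ring
  refine ⟨?_, ?_, ?_, ?_, ?_⟩
  · rw [hden]
    field_simp
    ring
  · rw [hden]
    field_simp
    ring
  · constructor
    · intro h; linarith [h]
    · intro h; rw [h]; norm_num
  · rw [div_eq_zero_iff]
    constructor
    · rintro (h | h)
      · rcases mul_eq_zero.mp h with h | h
        · rcases mul_eq_zero.mp h with h | h
          · norm_num at h
          · left; linarith
        · right; linarith
      · exfalso; exact (by positivity : (225:ℝ) * π^2 ≠ 0) h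
    · rintro (h | h) <;> subst h <;> left <;> ring
  · rintro ⟨h1, h2⟩
    have hm' : m = -11/12 := by linarith
    subst hm'
    rw [div_eq_zero_iff] at h2
    rcases h2 with h | h
    · norm_num at h
    · exact (by positivity : (225:ℝ) * π^2 ≠ 0) h
end
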